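/- arXiv:1603.00913 — 2 statements merged into one kernel-verified Lean document; each statement's English description precedes it below -/
import Mathlib

section
/- Let F ⊂ ℝ^n be the feasible adversary strategy region and f(b) = q_1·b_1 + ∑_{i=2}^n q_i·b_i·∏_{j=1}^{i−1} ℓ_j/(ℓ_j−1) a linear objective with nonnegative coefficients q_i ≥ 0. Then the maximum of f over F is attained at a point of F* := ∪_{i=1}^n A_i, where A_i = { b ∈ F : b_i ≥ b'_i for all b' ∈ F }. That is, max_{b∈F} f(b) = max_{b∈F*} f(b). -/
/-!
Put `P i = ∏_{j<i} (ℓ j - 1) / ℓ j` and `T k = ∑_{i ≤ k} P i`. The substitution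
`b i = P i * ∑_{k ≥ i} w k` (so `w` records the drops of the nonincreasing profile `b i / P i`)
maps the polytope `{w ≥ 0 | ∑ w k * T k = 1, ∑ w k ≤ min 1 M}` onto `F`, sends `b 0` to the
budget `∑ w k`, and makes the objective a linear form `∑ w k * (∑_{i ≤ k} q i)`.

Among the maximizers of that form on the polytope pick one of largest budget. If the budget is
slack and two entries `w j, w k` are positive, moving mass along
`T k • e j - T j • e k` preserves feasibility for small steps in both directions, so the
objective is constant along it and then the budget must be constant too, contradicting
`T j ≠ T k`. Hence either `b 0 = min 1 M`, the largest possible value, or `w` is supported at one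
`k`, and then `b k = P k / T k` is the largest value of the `k`-th coordinate, since
`T` increases and so `(∑_{i ≥ k} w' i) * T k ≤ ∑ w' i * T i = 1` on the polytope.
-/

open Finset Filter Topology Matrix

theorem dotProduct_eq_zero_of_isMaxOn {ι : Type*} [Fintype ι] {S : Set (ι → ℝ)}
    {w v c : ι → ℝ} (hmax : IsMaxOn (· ⬝ᵥ c) S w) (hv : ∀ᶠ t in 𝓝 (0 : ℝ), w + t • v ∈ S) :
    v ⬝ᵥ c = 0 := by
  have hline : ∀ t : ℝ, (w + t • v) ⬝ᵥ c = w ⬝ᵥ c + t * v ⬝ᵥ c := fun t => by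
    rw [add_dotProduct, smul_dotProduct, smul_eq_mul]
  have hloc : IsLocalMax (fun t : ℝ => w ⬝ᵥ c + t * v ⬝ᵥ c) 0 :=
    hv.mono fun t ht => by simpa [hline] using hmax ht
  simpa using hloc.hasDerivAt_eq_zero (((hasDerivAt_id' 0).mul_const _).const_add _)

section WeightPolytope

variable {ι : Type*} [Fintype ι]

def weightPolytope (T : ι → ℝ) (μ : ℝ) : Set (ι → ℝ) :=
  {w | 0 ≤ w ∧ w ⬝ᵥ T = 1 ∧ w ⬝ᵥ 1 ≤ μ}

theorem isCompact_weightPolytope (T : ι → ℝ) (μ : ℝ) : IsCompact (weightPolytope T μ) := by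
  have hclosed : IsClosed (weightPolytope T μ) :=
    (isClosed_le continuous_const continuous_id).inter <|
      (isClosed_eq (continuous_id.dotProduct continuous_const) continuous_const).inter
        (isClosed_le (continuous_id.dotProduct continuous_const) continuous_const)
  refine (isCompact_Icc (a := 0) (b := fun _ => μ)).of_isClosed_subset hclosed ?_
  rintro w ⟨hw0, -, hw1⟩
  refine ⟨hw0, fun i => le_trans ?_ hw1⟩
  rw [dotProduct_one]
  exact single_le_sum (fun k _ => hw0 k) (mem_univ i)

theorem eventually_add_smul_mem_weightPolytope {T w v : ι → ℝ} {μ : ℝ}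
    (hw : w ∈ weightPolytope T μ) (hslack : w ⬝ᵥ 1 < μ) (hvT : v ⬝ᵥ T = 0)
    (hsupp : ∀ i, v i ≠ 0 → 0 < w i) :
    ∀ᶠ t in 𝓝 (0 : ℝ), w + t • v ∈ weightPolytope T μ := by
  obtain ⟨hw0, hwT, -⟩ := hw
  have hcont : Continuous fun t : ℝ => w + t • v := by fun_prop
  have hnonneg : ∀ᶠ t in 𝓝 (0 : ℝ), ∀ i, 0 ≤ (w + t • v) i := by
    refine eventually_all.2 fun i => ?_
    by_cases hvi : v i = 0
    · exact Eventually.of_forall fun t => by simpa [hvi] using hw0 i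
    · refine (ContinuousAt.eventually_lt continuousAt_const
        ((continuous_apply i).comp hcont).continuousAt ?_).mono fun t ht => ht.le
      simpa using hsupp i hvi
  have hbudget : ∀ᶠ t in 𝓝 (0 : ℝ), (w + t • v) ⬝ᵥ 1 < μ :=
    ContinuousAt.eventually_lt (hcont.dotProduct continuous_const).continuousAt
      continuousAt_const (by simpa using hslack)
  filter_upwards [hnonneg, hbudget] with t ht0 ht1
  exact ⟨ht0, by rw [add_dotProduct, smul_dotProduct, hwT, hvT, smul_zero, add_zero], ht1.le⟩

theorem exists_isMaxOn_weightPolytope {T : ι → ℝ} {μ : ℝ} (hT : Function.Injective T)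
    (hne : (weightPolytope T μ).Nonempty) (c : ι → ℝ) :
    ∃ w ∈ weightPolytope T μ, IsMaxOn (· ⬝ᵥ c) (weightPolytope T μ) w ∧
      (w ⬝ᵥ 1 = μ ∨ ∃ k, ∀ i ≠ k, w i = 0) := by
  classical
  have hcompact := isCompact_weightPolytope T μ
  have hdot : ∀ a : ι → ℝ, Continuous (· ⬝ᵥ a) := fun a => continuous_id.dotProduct continuous_const
  obtain ⟨w₀, hw₀, hmax₀⟩ := hcompact.exists_isMaxOn hne (hdot c).continuousOn
  obtain ⟨w, ⟨hw, hwc : w ⬝ᵥ c = w₀ ⬝ᵥ c⟩, hmax⟩ :=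
    (hcompact.inter_right (isClosed_eq (hdot c) continuous_const)).exists_isMaxOn
      ⟨w₀, hw₀, rfl⟩ (hdot 1).continuousOn
  have hwmax : IsMaxOn (· ⬝ᵥ c) (weightPolytope T μ) w := fun x hx => by
    simpa [hwc] using hmax₀ hx
  refine ⟨w, hw, hwmax, ?_⟩
  rcases hw.2.2.eq_or_lt with hbudget | hslack
  · exact .inl hbudget
  refine .inr ?_
  by_contra! htwo
  obtain ⟨j, hj⟩ : ∃ j, w j ≠ 0 := by
    by_contra! h
    simpa [show w = 0 from funext h] using hw.2.1
  obtain ⟨k, hkj, hk⟩ := htwo j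
  set v : ι → ℝ := Pi.single j (T k) - Pi.single k (T j)
  have hvT : v ⬝ᵥ T = 0 := by
    simp only [v, sub_dotProduct, single_dotProduct]; ring
  have hsupp : ∀ i, v i ≠ 0 → 0 < w i := fun i hi => by
    have : i = j ∨ i = k := by
      by_contra! h
      simp [v, h.1, h.2] at hi
    exact (hw.1 i).lt_of_ne (by rcases this with rfl | rfl <;> tauto)
  have hline := eventually_add_smul_mem_weightPolytope hw hslack hvT hsupp
  have hvc : v ⬝ᵥ c = 0 := dotProduct_eq_zero_of_isMaxOn hwmax hline
  have hv1 : v ⬝ᵥ 1 = 0 := dotProduct_eq_zero_of_isMaxOn hmax <| hline.mono fun t ht =>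
    ⟨ht, show _ = _ by rw [add_dotProduct, smul_dotProduct, hvc, smul_zero, add_zero, hwc]⟩
  have : T k = T j := by
    simpa [v, sub_dotProduct, sub_eq_zero, Ne.symm hkj] using hv1
  exact hkj (hT this)

theorem sum_Ici_mul_le_one [Preorder ι] [LocallyFiniteOrderTop ι] {T w : ι → ℝ} {μ : ℝ}
    (hT0 : 0 ≤ T) (hT : Monotone T) (hw : w ∈ weightPolytope T μ) (k : ι) :
    (∑ i ∈ Ici k, w i) * T k ≤ 1 :=
  calc (∑ i ∈ Ici k, w i) * T k = ∑ i ∈ Ici k, w i * T k := sum_mul _ _ _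
    _ ≤ ∑ i ∈ Ici k, w i * T i :=
      sum_le_sum fun i hi => mul_le_mul_of_nonneg_left (hT (mem_Ici.1 hi)) (hw.1 i)
    _ ≤ ∑ i, w i * T i :=
      sum_le_sum_of_subset_of_nonneg (subset_univ _) fun i _ _ => mul_nonneg (hw.1 i) (hT0 i)
    _ = 1 := hw.2.1

end WeightPolytope

theorem sum_mul_sum_Ici {ι : Type*} [Fintype ι] [Preorder ι] [LocallyFiniteOrderTop ι]
    [LocallyFiniteOrderBot ι] (a c : ι → ℝ) :
    ∑ i, a i * ∑ k ∈ Ici i, c k = c ⬝ᵥ fun k => ∑ i ∈ Iic k, a i := by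
  simp_rw [dotProduct, mul_sum]
  rw [sum_comm' (s' := Iic) (t' := univ) fun i k => by simp]
  exact sum_congr rfl fun k _ => sum_congr rfl fun i _ => mul_comm _ _

theorem Fin.sum_Ici_sub_succ {G : Type*} [AddCommGroup G] {n : ℕ} (u : ℕ → G) (i : Fin n) :
    ∑ k ∈ Ici i, (u k - u (k + 1)) = u i - u n :=
  calc ∑ k ∈ Ici i, (u k - u (k + 1)) = ∑ m ∈ Ico (i : ℕ) n, (u m - u (m + 1)) := by
        rw [← Fin.map_valEmbedding_Ici, sum_map]; rfl
    _ = u i - u n := by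
        rw [← neg_sub, ← sum_Ico_sub u i.isLt.le, ← sum_neg_distrib]; simp

section ChainConstraints

variable {n : ℕ} {r : ℕ → ℝ}

def feasibleSet (n : ℕ) (h0 : 0 < n) (μ : ℝ) (r : ℕ → ℝ) : Set (Fin n → ℝ) :=
  {b | (∑ i, b i) = 1 ∧ (∀ i, 0 ≤ b i) ∧ b ⟨0, h0⟩ ≤ μ ∧
    ∀ m : ℕ, ∀ h : m + 1 < n, b ⟨m + 1, h⟩ ≤ r m * b ⟨m, Nat.lt_of_succ_lt h⟩}

def decay (r : ℕ → ℝ) (m : ℕ) : ℝ := ∏ j ∈ range m, r j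

def decayCumsum (r : ℕ → ℝ) : Fin n → ℝ := fun k => ∑ i ∈ Iic k, decay r i

def scaledTailSum (r : ℕ → ℝ) (w : Fin n → ℝ) : Fin n → ℝ :=
  fun i => decay r i * ∑ k ∈ Ici i, w k

theorem decay_pos (hr : ∀ j, 0 < r j) (m : ℕ) : 0 < decay r m :=
  prod_pos fun j _ => hr j

theorem decay_succ (m : ℕ) : decay r (m + 1) = decay r m * r m :=
  prod_range_succ _ _

theorem strictMono_decayCumsum (hr : ∀ j, 0 < r j) : StrictMono (decayCumsum (n := n) r) :=
  fun k k' hkk' => sum_lt_sum_of_subset (Iic_subset_Iic.2 hkk'.le) (mem_Iic.2 le_rfl)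
    (by simpa using hkk') (decay_pos hr _) fun _ _ _ => (decay_pos hr _).le

theorem sum_scaledTailSum (w : Fin n → ℝ) : ∑ i, scaledTailSum r w i = w ⬝ᵥ decayCumsum r :=
  sum_mul_sum_Ici _ _

theorem scaledTailSum_zero (h0 : 0 < n) (w : Fin n → ℝ) :
    scaledTailSum r w ⟨0, h0⟩ = w ⬝ᵥ 1 := by
  rw [dotProduct_one, scaledTailSum,
    show Ici (⟨0, h0⟩ : Fin n) = univ from eq_univ_of_forall fun k => mem_Ici.2 k.val.zero_le]
  simp [decay]

theorem scaledTailSum_mem_feasibleSet_iff (hr : ∀ j, 0 ≤ r j) (h0 : 0 < n) {μ : ℝ}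
    {w : Fin n → ℝ} (hw : 0 ≤ w) :
    scaledTailSum r w ∈ feasibleSet n h0 μ r ↔ w ∈ weightPolytope (decayCumsum r) μ := by
  have hdecay : ∀ m, 0 ≤ decay r m := fun m => prod_nonneg fun j _ => hr j
  have hnonneg : ∀ i, 0 ≤ scaledTailSum r w i := fun i =>
    mul_nonneg (hdecay i) (sum_nonneg fun k _ => hw k)
  have hchain : ∀ m : ℕ, ∀ h : m + 1 < n,
      scaledTailSum r w ⟨m + 1, h⟩ ≤ r m * scaledTailSum r w ⟨m, Nat.lt_of_succ_lt h⟩ :=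
    fun m h =>
    calc decay r (m + 1) * ∑ k ∈ Ici ⟨m + 1, h⟩, w k
        = r m * decay r m * ∑ k ∈ Ici ⟨m + 1, h⟩, w k := by rw [decay_succ, mul_comm (decay r m)]
      _ ≤ r m * decay r m * ∑ k ∈ Ici ⟨m, Nat.lt_of_succ_lt h⟩, w k := by
        refine mul_le_mul_of_nonneg_left ?_ (mul_nonneg (hr m) (hdecay m))
        exact sum_le_sum_of_subset_of_nonneg (Ici_subset_Ici.2 (Fin.mk_le_mk.2 m.le_succ))
          fun k _ _ => hw k
      _ = r m * (decay r m * ∑ k ∈ Ici ⟨m, Nat.lt_of_succ_lt h⟩, w k) := mul_assoc _ _ _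
  rw [feasibleSet, weightPolytope, Set.mem_ofPred_eq, Set.mem_ofPred_eq, sum_scaledTailSum,
    scaledTailSum_zero]
  exact ⟨fun h => ⟨hw, h.1, h.2.2.1⟩, fun h => ⟨h.2.1, hnonneg, h.2.2, hchain⟩⟩

theorem exists_scaledTailSum_eq (hr : ∀ j, 0 < r j) {h0 : 0 < n} {μ : ℝ} {b : Fin n → ℝ}
    (hb : b ∈ feasibleSet n h0 μ r) : ∃ w, 0 ≤ w ∧ scaledTailSum r w = b := by
  obtain ⟨-, hb0, -, hchain⟩ := hb
  set u : ℕ → ℝ := fun m => if h : m < n then b ⟨m, h⟩ / decay r m else 0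
  have hu : ∀ i : Fin n, u i = b i / decay r i := fun i => by simp [u]
  refine ⟨fun k => u k - u (k + 1), fun k => sub_nonneg.2 ?_, funext fun i => ?_⟩
  · by_cases hk : (k : ℕ) + 1 < n
    · rw [hu k, show u (k + 1) = b ⟨k + 1, hk⟩ / decay r (k + 1) by simp [u, hk], decay_succ,
        mul_comm, ← div_div, div_le_div_iff_of_pos_right (decay_pos hr k), div_le_iff₀ (hr k),
        mul_comm]
      exact hchain k hk
    · rw [hu k, show u (k + 1) = 0 by simp [u, hk]]
      exact div_nonneg (hb0 k) (decay_pos hr k).le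
  · rw [scaledTailSum, Fin.sum_Ici_sub_succ, show u n = 0 by simp [u], sub_zero, hu,
      mul_div_cancel₀ _ (decay_pos hr i).ne']

theorem feasibleSet_eq_image (hr : ∀ j, 0 < r j) (h0 : 0 < n) (μ : ℝ) :
    feasibleSet n h0 μ r = scaledTailSum r '' weightPolytope (decayCumsum r) μ := by
  ext b
  constructor
  · intro hb
    obtain ⟨w, hw, rfl⟩ := exists_scaledTailSum_eq hr hb
    exact ⟨w, (scaledTailSum_mem_feasibleSet_iff (fun j => (hr j).le) h0 hw).1 hb, rfl⟩
  · rintro ⟨w, hw, rfl⟩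
    exact (scaledTailSum_mem_feasibleSet_iff (fun j => (hr j).le) h0 hw.1).2 hw

theorem scaledTailSum_le_of_forall_ne_eq_zero (hr : ∀ j, 0 < r j) {μ : ℝ} {w w' : Fin n → ℝ}
    (hw : w ∈ weightPolytope (decayCumsum r) μ) {k : Fin n} (hk : ∀ i ≠ k, w i = 0)
    (hw' : w' ∈ weightPolytope (decayCumsum r) μ) :
    scaledTailSum r w' k ≤ scaledTailSum r w k := by
  have hTk : w k * decayCumsum r k = 1 := by
    rw [← hw.2.1, dotProduct, sum_eq_single k fun i _ hi => by rw [hk i hi, zero_mul]]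
    simp
  have hwk : ∑ i ∈ Ici k, w i = w k :=
    sum_eq_single_of_mem k (mem_Ici.2 le_rfl) fun i _ hi => hk i hi
  have hT0 : ∀ i : Fin n, 0 < decayCumsum r i := fun i =>
    sum_pos (fun j _ => decay_pos hr j) ⟨i, mem_Iic.2 le_rfl⟩
  have hbound := sum_Ici_mul_le_one (fun i => (hT0 i).le)
    (strictMono_decayCumsum hr).monotone hw' k
  rw [scaledTailSum, scaledTailSum, hwk]
  exact mul_le_mul_of_nonneg_left (le_of_mul_le_mul_right (hbound.trans hTk.ge) (hT0 k))
    (decay_pos hr k).le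

theorem sum_mul_scaledTailSum_mul_inv (hr : ∀ j, 0 < r j) (q w : Fin n → ℝ) :
    ∑ i, q i * scaledTailSum r w i * (decay r i)⁻¹ = w ⬝ᵥ fun k => ∑ i ∈ Iic k, q i := by
  rw [← sum_mul_sum_Ici]
  refine sum_congr rfl fun i _ => ?_
  rw [scaledTailSum]
  field_simp [(decay_pos hr i).ne']

end ChainConstraints

/-- Theorem 3 of the paper: the linear objective
`f(b) = ∑ i q_i · b_i · ∏_{j<i} ℓ_j/(ℓ_j−1)` attains its maximum over the
feasible region `F` at a point of `F* = ⋃ i A_i`, where `A_i` is the set of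
feasible strategies maximizing the `i`-th coordinate. -/
theorem stmt_14 (n : ℕ) (hn : 2 ≤ n) (M : ℝ)
    (ℓ : ℕ → ℝ) (hℓ : ∀ j, 2 ≤ ℓ j)
    (q : Fin n → ℝ)
    (F : Set (Fin n → ℝ))
    (hF : F = {b : Fin n → ℝ |
      (∑ i, b i) = 1 ∧ (∀ i, 0 ≤ b i) ∧
      b ⟨0, by omega⟩ ≤ min 1 M ∧
      ∀ m : ℕ, ∀ h : m + 1 < n,
        b ⟨m + 1, h⟩ ≤ ((ℓ m - 1) / ℓ m) * b ⟨m, by omega⟩})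
    (hne : F.Nonempty)
    (f : (Fin n → ℝ) → ℝ)
    (hf : ∀ b, f b = ∑ i : Fin n, q i * b i * ∏ j ∈ Finset.range i, ℓ j / (ℓ j - 1))
    (A : Fin n → Set (Fin n → ℝ))
    (hA : ∀ i, A i = {b | b ∈ F ∧ ∀ b' ∈ F, b' i ≤ b i}) :
    ∃ b ∈ ⋃ i : Fin n, A i, ∀ b' ∈ F, f b' ≤ f b := by
  set r : ℕ → ℝ := fun j => (ℓ j - 1) / ℓ j
  have hr : ∀ j, 0 < r j := fun j => div_pos (by linarith [hℓ j]) (by linarith [hℓ j])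
  have hFW : F = scaledTailSum r '' weightPolytope (decayCumsum r) (min 1 M) :=
    hF.trans (feasibleSet_eq_image hr (by omega) _)
  have hobj : ∀ w, f (scaledTailSum r w) = w ⬝ᵥ fun k => ∑ i ∈ Iic k, q i := fun w => by
    rw [hf, ← sum_mul_scaledTailSum_mul_inv hr]
    simp [r, decay, inv_div]
  obtain ⟨w, hw, hmax, hvertex⟩ := exists_isMaxOn_weightPolytope
    (strictMono_decayCumsum hr).injective (by rw [hFW] at hne; exact hne.of_image)
    fun k => ∑ i ∈ Iic k, q i
  have hwF : scaledTailSum r w ∈ F := hFW ▸ Set.mem_image_of_mem _ hw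
  refine ⟨scaledTailSum r w, Set.mem_iUnion.2 ?_, ?_⟩
  · rcases hvertex with hbudget | ⟨k, hk⟩
    · refine ⟨⟨0, by omega⟩, ?_⟩
      rw [hA]
      refine ⟨hwF, fun b' hb' => ?_⟩
      rw [hF] at hb'
      rw [scaledTailSum_zero, hbudget]
      exact hb'.2.2.1
    · refine ⟨k, ?_⟩
      rw [hA]
      refine ⟨hwF, fun b' hb' => ?_⟩
      rw [hFW] at hb'
      obtain ⟨w', hw', rfl⟩ := hb'
      exact scaledTailSum_le_of_forall_ne_eq_zero hr hw hk hw'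
  · rw [hFW]
    rintro _ ⟨w', hw', rfl⟩
    rw [hobj, hobj]
    exact hmax hw'
end

section
/- (Two-round adversary success rate) Let β = B/(k|P|), and suppose q_1, q_2 ≥ 0 with q_1 + q_2 = 1. The optimal adversary success rate is: P_adv = max{ q_1·β, (2/3)·β } when β ≤ 1, and P_adv = max{ q_1 + 2(β−1)·q_2, (2/3)·β } when 1 ≤ β ≤ 3/2, where the formula (2/3)β comes from the strategy (2/3, 1/3) and the other term from the b_1-maximizing strategy. -/
/-!
The admissible strategies form the segment `b₂ = 1 - b₁`, `2/3 ≤ b₁ ≤ min 1 (1/β)`, on which the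
success probability is affine, hence convex, in `b₁`. Its maximum is therefore attained at an
endpoint: `b₁ = 2/3` gives `(2/3)β`, and `b₁ = min 1 (1/β)` gives `q₁β` or `q₁ + 2(β-1)q₂`.
-/

open Set

theorem ConvexOn.isGreatest_image_Icc {𝕜 : Type*} [Field 𝕜] [LinearOrder 𝕜] [IsStrictOrderedRing 𝕜]
    {f : 𝕜 → 𝕜} {a b : 𝕜} (hab : a ≤ b) (hf : ConvexOn 𝕜 (Icc a b) f) :
    IsGreatest (f '' Icc a b) (max (f a) (f b)) := by
  refine ⟨?_, ?_⟩
  · rcases max_choice (f a) (f b) with h | h <;> rw [h]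
    · exact mem_image_of_mem f (left_mem_Icc.2 hab)
    · exact mem_image_of_mem f (right_mem_Icc.2 hab)
  · rintro _ ⟨z, hz, rfl⟩
    exact hf.le_max_of_mem_Icc (left_mem_Icc.2 hab) (right_mem_Icc.2 hab) hz

theorem convexOn_univ_affine (u v : ℝ) : ConvexOn ℝ univ fun x : ℝ => u + v * x :=
  (convexOn_const u convex_univ).add ((LinearMap.mulLeft ℝ v).convexOn convex_univ)

theorem strategies_eq_image_Icc {c : ℝ} (hc : c ≤ 1) :
    {b : ℝ × ℝ | b.1 + b.2 = 1 ∧ 0 ≤ b.1 ∧ b.1 ≤ c ∧ 0 ≤ b.2 ∧ b.2 ≤ b.1 / 2} =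
      (fun x => (x, 1 - x)) '' Icc (2 / 3) c := by
  ext ⟨b₁, b₂⟩
  simp only [mem_ofPred_eq, mem_image, mem_Icc, Prod.mk.injEq]
  constructor
  · rintro ⟨hsum, -, hb₁c, -, hb₂⟩
    exact ⟨b₁, ⟨by linarith, hb₁c⟩, rfl, by linarith⟩
  · rintro ⟨x, ⟨hx, hxc⟩, rfl, rfl⟩
    exact ⟨by ring, by linarith, hxc, by linarith, by linarith⟩

theorem stmt_15_general (β : ℝ) (hβ : 0 < β)
    (q₁ q₂ : ℝ) (hq : q₁ + q₂ = 1)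
    (F : Set (ℝ × ℝ))
    (hF : F = {b : ℝ × ℝ | b.1 + b.2 = 1 ∧ 0 ≤ b.1 ∧ b.1 ≤ min 1 (1 / β) ∧
      0 ≤ b.2 ∧ b.2 ≤ b.1 / 2}) :
    (β ≤ 1 → IsGreatest ((fun b : ℝ × ℝ => β * (q₁ * b.1 + 2 * q₂ * b.2)) '' F)
      (max (q₁ * β) (2 / 3 * β))) ∧
    (1 ≤ β → β ≤ 3 / 2 →
      IsGreatest ((fun b : ℝ × ℝ => β * (q₁ * b.1 + 2 * q₂ * b.2)) '' F)
        (max (q₁ + 2 * (β - 1) * q₂) (2 / 3 * β))) := by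
  set g : ℝ → ℝ := fun x => 2 * β * q₂ + β * (q₁ - 2 * q₂) * x with hg
  have hsuccess : (fun b : ℝ × ℝ => β * (q₁ * b.1 + 2 * q₂ * b.2)) '' F =
      g '' Icc (2 / 3) (min 1 (1 / β)) := by
    rw [hF, strategies_eq_image_Icc (min_le_left _ _), image_image]
    congr 1
    funext x
    ring
  have hg_max {c : ℝ} (hc : 2 / 3 ≤ c) : IsGreatest (g '' Icc (2 / 3) c) (max (g c) (g (2 / 3))) :=
    max_comm (g c) _ ▸ ((convexOn_univ_affine _ _).subset (subset_univ _)
      (convex_Icc _ _)).isGreatest_image_Icc hc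
  have hg_two_thirds : g (2 / 3) = 2 / 3 * β := by
    simp only [hg]; linear_combination (2 / 3 * β) * hq
  rw [hsuccess]
  constructor
  · intro hβ1
    rw [min_eq_left (one_le_one_div hβ hβ1), ← hg_two_thirds]
    convert hg_max (c := 1) (by norm_num) using 2
    simp only [hg]; ring
  · intro hβ1 hβ32
    rw [min_eq_right (div_le_one_of_le₀ hβ1 hβ.le), ← hg_two_thirds]
    have h23 : 2 / 3 ≤ 1 / β := by rw [le_div_iff₀ hβ]; linarith
    convert hg_max h23 using 2
    simp only [hg]
    field_simp
    ring

/-- two-round adversary success rate. With `β = B/(k|P|)`,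
success probability of strategy `(b₁,b₂) ∈ F` equal to `β(q₁b₁ + 2q₂b₂)`,
the optimal success rate is `max{q₁β, (2/3)β}` when `β ≤ 1`, and
`max{q₁ + 2(β−1)q₂, (2/3)β}` when `1 ≤ β ≤ 3/2`. -/
theorem stmt_15 (β : ℝ) (hβ : 0 < β)
    (q₁ q₂ : ℝ) (hq₁ : 0 ≤ q₁) (hq₂ : 0 ≤ q₂) (hq : q₁ + q₂ = 1)
    (F : Set (ℝ × ℝ))
    (hF : F = {b : ℝ × ℝ | b.1 + b.2 = 1 ∧ 0 ≤ b.1 ∧ b.1 ≤ min 1 (1 / β) ∧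
      0 ≤ b.2 ∧ b.2 ≤ b.1 / 2}) :
    (β ≤ 1 → IsGreatest ((fun b : ℝ × ℝ => β * (q₁ * b.1 + 2 * q₂ * b.2)) '' F)
      (max (q₁ * β) (2 / 3 * β))) ∧
    (1 ≤ β → β ≤ 3 / 2 →
      IsGreatest ((fun b : ℝ × ℝ => β * (q₁ * b.1 + 2 * q₂ * b.2)) '' F)
        (max (q₁ + 2 * (β - 1) * q₂) (2 / 3 * β))) :=
  stmt_15_general β hβ q₁ q₂ hq F hF
end
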